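/- Suppose the network is fully connected, i.e., A_{ij} = 1/m for all i, j, and there exists at least one agent i with π_{iθ} ≠ π*_i. Then for every agent i, (1/t) log μ_{it} converges in probability to −D_CA(Π*‖Π_θ), where D_CA(Π*‖Π_θ) = −∑_{k_1=1}^K ⋯ ∑_{k_m=1}^K (∏_{i=1}^m π*_{i k_i}) · log( (1/m) ∑_{i=1}^m π_{i k_i θ}/π*_{i k_i} ) is the Centralized Average divergence. -/

import Mathlib

open MeasureTheory ProbabilityTheory Filter Finset

/-- Number of times category `k` was observed among the first `t` signals
(the signal at time `τ ≥ 1` is `X (τ - 1)`, i.e. `X` is indexed from `0`). -/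
def sigCount {Ω : Type*} {K : ℕ} (X : ℕ → Ω → Fin K) (k : Fin K) (t : ℕ) (x : Ω) : ℕ :=
  ((Finset.range t).filter (fun τ => X τ x = k)).card

/-- Centralized Average divergence: `D_CA(Π*‖Π_θ) =
−∑_{k_1,…,k_m} (∏ᵢ π*_{i kᵢ}) log((1/m) ∑ᵢ π_{i kᵢ θ}/π*_{i kᵢ})`. -/
noncomputable def DCA {m K : ℕ} (πstar πθ : Fin m → Fin K → ℝ) : ℝ :=
  -∑ κ : Fin m → Fin K,
      (∏ i, πstar i (κ i)) * Real.log ((1 / (m : ℝ)) * ∑ i, πθ i (κ i) / πstar i (κ i))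

/-!
Because the weight matrix has rank one, the network average `S_t = (1/m) ∑ⱼ μ_{jt}` satisfies
`S_{t+1} = L_t S_t` with `L_t = (1/m) ∑ⱼ ℓⱼ(t + 1, ω_{j,t+1})`, so
`log μ_{i,t+1} = log ℓᵢ(t + 1, ω_{i,t+1}) + ∑_{τ<t} log L_τ`.
By the strong law of large numbers the empirical frequencies `n_{jkt}/t` tend to `π*_{jk}`
almost surely, so each certain likelihood is asymptotically the likelihood ratio
`π_{jkθ}/π*_{jk}` of the observed category, uniformly in `k`. Hence `log L_τ` is within `o(1)` of
`log ((1/m) ∑ⱼ π_{j ω_{jτ} θ}/π*_{j ω_{jτ}})`, an i.i.d. sequence whose Cesàro means tend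
almost surely to `−D_CA(Π*‖Π_θ)` by the strong law again, while the single factor
`log ℓᵢ` is bounded and disappears after division by `t`. Almost sure convergence implies
convergence in probability.
-/

open Function
open scoped Topology

section LogSum

variable {ι : Type*} [Fintype ι] [Nonempty ι] {w a b : ι → ℝ} {e : ℝ}

lemma log_sum_mul_le_log_sum_mul_add (hw : ∀ j, 0 < w j) (ha : ∀ j, 0 < a j)
    (hb : ∀ j, 0 < b j) (h : ∀ j, Real.log (a j) ≤ Real.log (b j) + e) :
    Real.log (∑ j, w j * a j) ≤ Real.log (∑ j, w j * b j) + e := by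
  have hsum_pos : ∀ c : ι → ℝ, (∀ j, 0 < c j) → 0 < ∑ j, w j * c j := fun c hc =>
    Finset.sum_pos (fun j _ => mul_pos (hw j) (hc j)) univ_nonempty
  have hle : ∑ j, w j * a j ≤ Real.exp e * ∑ j, w j * b j := by
    rw [Finset.mul_sum]
    refine Finset.sum_le_sum fun j _ => ?_
    have hab : a j ≤ Real.exp e * b j := by
      rw [← Real.log_le_log_iff (ha j) (by positivity [hb j]),
        Real.log_mul (Real.exp_ne_zero e) (hb j).ne', Real.log_exp]
      linarith [h j]
    nlinarith [hw j]
  calc Real.log (∑ j, w j * a j) ≤ Real.log (Real.exp e * ∑ j, w j * b j) :=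
        Real.log_le_log (hsum_pos a ha) hle
    _ = Real.log (∑ j, w j * b j) + e := by
        rw [Real.log_mul (Real.exp_ne_zero e) (hsum_pos b hb).ne', Real.log_exp, add_comm]

lemma abs_log_sum_mul_sub_log_sum_mul_le (hw : ∀ j, 0 < w j) (ha : ∀ j, 0 < a j)
    (hb : ∀ j, 0 < b j) (h : ∀ j, |Real.log (a j) - Real.log (b j)| ≤ e) :
    |Real.log (∑ j, w j * a j) - Real.log (∑ j, w j * b j)| ≤ e := by
  have hab := log_sum_mul_le_log_sum_mul_add hw ha hb fun j => by
    linarith [(abs_sub_le_iff.1 (h j)).1]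
  have hba := log_sum_mul_le_log_sum_mul_add hw hb ha fun j => by
    linarith [(abs_sub_le_iff.1 (h j)).2]
  exact abs_sub_le_iff.2 ⟨by linarith, by linarith⟩

end LogSum

lemma tendsto_apply_of_forall_tendsto_zero {α ι E : Type*} [Fintype ι]
    [SeminormedAddCommGroup E] {l : Filter α} {F : α → ι → E}
    (hF : ∀ k, Tendsto (fun a => F a k) l (𝓝 0)) (κ : α → ι) :
    Tendsto (fun a => F a (κ a)) l (𝓝 0) := by
  have hF' : Tendsto F l (𝓝 0) := tendsto_pi_nhds.2 hF
  exact squeeze_zero_norm (fun a => norm_le_pi_norm (F a) (κ a)) (by simpa using hF'.norm)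

lemma tendsto_log_mul_div_of_tendsto_div {n : ℕ → ℝ} {p : ℝ} (hp : 0 < p) (K : ℝ)
    (hn : Tendsto (fun τ => n τ / τ) atTop (𝓝 p)) :
    Tendsto (fun τ : ℕ => Real.log ((τ + K) * p / (n τ + 1))) atTop (𝓝 0) := by
  have hinv : Tendsto (fun τ : ℕ => (τ : ℝ)⁻¹) atTop (𝓝 0) := tendsto_inv_atTop_nhds_zero_nat
  have hnum : Tendsto (fun τ : ℕ => p * (1 + K * (τ : ℝ)⁻¹)) atTop (𝓝 p) := by
    simpa using ((hinv.const_mul K).const_add 1).const_mul p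
  have hden : Tendsto (fun τ : ℕ => n τ / τ + (τ : ℝ)⁻¹) atTop (𝓝 p) := by
    simpa using hn.add hinv
  have hratio : Tendsto (fun τ : ℕ => (τ + K) * p / (n τ + 1)) atTop (𝓝 1) := by
    rw [← div_self hp.ne']
    refine (hnum.div hden hp.ne').congr' ?_
    filter_upwards [eventually_ne_atTop 0] with τ hτ
    simp only [Pi.div_apply]
    field_simp
  simpa [Function.comp_def] using (Real.continuousAt_log one_ne_zero).tendsto.comp hratio

lemma tendsto_sum_range_div_of_tendsto_sub {u y : ℕ → ℝ} {c : ℝ}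
    (huy : Tendsto (fun t => u t - y t) atTop (𝓝 0))
    (hy : Tendsto (fun t => (∑ τ ∈ range t, y τ) / t) atTop (𝓝 c)) :
    Tendsto (fun t => (∑ τ ∈ range t, u τ) / t) atTop (𝓝 c) := by
  refine (zero_add c ▸ huy.cesaro.add hy).congr fun t => ?_
  rw [Finset.sum_sub_distrib]
  ring

lemma tendsto_div_of_succ_eq_add_sum {f b u : ℕ → ℝ} {c : ℝ}
    (hf : ∀ t, f (t + 1) = b t + ∑ τ ∈ range t, u τ)
    (hb : Tendsto (fun t => b t / t) atTop (𝓝 0))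
    (hu : Tendsto (fun t => (∑ τ ∈ range t, u τ) / t) atTop (𝓝 c)) :
    Tendsto (fun t => f t / t) atTop (𝓝 c) := by
  rw [← tendsto_add_atTop_iff_nat 1]
  have hlim := (hb.add hu).mul (tendsto_natCast_div_add_atTop (1 : ℝ))
  rw [zero_add, mul_one] at hlim
  refine hlim.congr' ?_
  filter_upwards [eventually_ne_atTop 0] with t ht
  rw [hf]
  push_cast
  field_simp

lemma tendsto_div_natCast_of_tendsto_sub_of_abs_le {b y : ℕ → ℝ} {C : ℝ}
    (hby : Tendsto (fun t => b t - y t) atTop (𝓝 0)) (hy : ∀ t, |y t| ≤ C) :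
    Tendsto (fun t => b t / t) atTop (𝓝 0) := by
  have hbdd : IsBoundedUnder (· ≤ ·) atTop fun t => ‖b t‖ :=
    (hby.norm.add_const C).isBoundedUnder_le.mono_le <| Eventually.of_forall fun t => by
      simp only [Real.norm_eq_abs]
      linarith [abs_sub_abs_le_abs_sub (b t) (y t), hy t]
  simpa [div_eq_inv_mul] using tendsto_inv_atTop_nhds_zero_nat.zero_mul_isBoundedUnder_le hbdd

lemma sum_mul_eq_prod_range_of_rankOne_update {ι : Type*} [Fintype ι] {w : ι → ℝ}
    (hw : ∑ j, w j = 1) {a μ : ℕ → ι → ℝ} (h0 : ∀ j, μ 0 j = 1)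
    (hstep : ∀ t j, μ (t + 1) j = a t j * ∑ k, w k * μ t k) (t : ℕ) :
    ∑ j, w j * μ t j = ∏ τ ∈ range t, ∑ j, w j * a τ j := by
  induction t with
  | zero => simp [h0, hw]
  | succ t ih =>
    simp_rw [hstep, ← mul_assoc, ← Finset.sum_mul, ih, Finset.prod_range_succ, mul_comm]

section Probability

variable {Ω : Type*} [MeasurableSpace Ω] {P : Measure Ω}

lemma tendsto_measure_lt_abs_sub_of_ae_tendsto [IsFiniteMeasure P] {f : ℕ → Ω → ℝ} {c : ℝ}
    (hf : ∀ t, AEStronglyMeasurable (f t) P)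
    (h : ∀ᵐ x ∂P, Tendsto (fun t => f t x) atTop (𝓝 c)) {ε : ℝ} (hε : 0 < ε) :
    Tendsto (fun t => P {x | ε < |f t x - c|}) atTop (𝓝 0) := by
  have hle := tendstoInMeasure_iff_dist.1 (tendstoInMeasure_of_tendsto_ae hf h) ε hε
  refine tendsto_of_tendsto_of_tendsto_of_le_of_le tendsto_const_nhds hle (fun _ => zero_le)
    fun t => measure_mono fun x hx => ?_
  exact (Real.dist_eq _ _ ▸ hx.le : ε ≤ dist (f t x) c)

lemma identDistrib_of_measure_preimage_singleton_eq {Ω' β : Type*} [MeasurableSpace Ω']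
    {P' : Measure Ω'} [MeasurableSpace β] [Countable β] [MeasurableSingletonClass β]
    {Y : Ω → β} {Z : Ω' → β} (hY : Measurable Y) (hZ : Measurable Z)
    (h : ∀ b, P (Y ⁻¹' {b}) = P' (Z ⁻¹' {b})) : IdentDistrib Y Z P P' where
  aemeasurable_fst := hY.aemeasurable
  aemeasurable_snd := hZ.aemeasurable
  map_eq := Measure.ext_of_singleton fun b => by
    rw [Measure.map_apply hY (measurableSet_singleton b),
      Measure.map_apply hZ (measurableSet_singleton b), h]

lemma ae_tendsto_sum_range_div_of_fintype [IsFiniteMeasure P] {β : Type*} [Fintype β]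
    [MeasurableSpace β] [MeasurableSingletonClass β] {Z : ℕ → Ω → β}
    (hindep : Pairwise ((IndepFun · · P) on Z)) (hident : ∀ t, IdentDistrib (Z t) (Z 0) P P)
    (g : β → ℝ) :
    ∀ᵐ x ∂P, Tendsto (fun t => (∑ τ ∈ range t, g (Z τ x)) / t) atTop
      (𝓝 (∑ b, P.real (Z 0 ⁻¹' {b}) * g b)) := by
  have hg : Measurable g := measurable_of_countable g
  have hZ0 : AEMeasurable (Z 0) P := (hident 0).aemeasurable_fst
  have hint : Integrable (g ∘ Z 0) P :=
    (integrable_map_measure hg.aestronglyMeasurable hZ0).1 (Integrable.of_finite)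
  have hmean : ∫ x, g (Z 0 x) ∂P = ∑ b, P.real (Z 0 ⁻¹' {b}) * g b := by
    rw [← integral_map hZ0 hg.aestronglyMeasurable, integral_fintype Integrable.of_finite]
    simp_rw [map_measureReal_apply_of_aemeasurable hZ0 (measurableSet_singleton _), smul_eq_mul]
  simpa [hmean] using strong_law_ae_real (fun t => g ∘ Z t) hint
    (fun τ σ hτσ => (hindep hτσ).comp hg hg) fun t => (hident t).comp hg

lemma ae_tendsto_sigCount_div [IsFiniteMeasure P] {K : ℕ} {X : ℕ → Ω → Fin K}
    (hindep : Pairwise ((IndepFun · · P) on X)) (hident : ∀ t, IdentDistrib (X t) (X 0) P P)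
    (k : Fin K) :
    ∀ᵐ x ∂P, Tendsto (fun t => (sigCount X k t x : ℝ) / t) atTop (𝓝 (P.real (X 0 ⁻¹' {k}))) := by
  have h := ae_tendsto_sum_range_div_of_fintype hindep hident fun b => if b = k then 1 else 0
  simp_rw [mul_ite, mul_one, mul_zero, Finset.sum_ite_eq', Finset.mem_univ, if_true,
    ← Finset.natCast_card_filter] at h
  exact h

lemma measure_preimage_pi_singleton_eq_prod {ι α : Type*} [Fintype ι] [MeasurableSpace α]
    [MeasurableSingletonClass α]
    {Y : ι → Ω → α} (hY : iIndepFun Y P) (a : ι → α) :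
    P ((fun x i => Y i x) ⁻¹' {a}) = ∏ i, P (Y i ⁻¹' {a i}) := by
  have hset : (fun x i => Y i x) ⁻¹' {a} = ⋂ i, Y i ⁻¹' {a i} := by
    ext x
    simp [funext_iff]
  rw [hset, hY.meas_iInter fun i => ⟨{a i}, measurableSet_singleton _, rfl⟩]

lemma pairwise_indepFun_columns {ι α : Type*} [Fintype ι] [MeasurableSpace α]
    {X : ι → ℕ → Ω → α} (hX : ∀ i t, Measurable (X i t))
    (hindep : iIndepFun (fun p : ι × ℕ => X p.1 p.2) P) :
    Pairwise ((IndepFun · · P) on fun t x i => X i t x) := by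
  classical
  intro τ σ hτσ
  let column : ℕ → Finset (ι × ℕ) := fun t => univ.image (·, t)
  have hdisj : Disjoint (column τ) (column σ) := by
    simp only [column, Finset.disjoint_left, Finset.mem_image]
    rintro _ ⟨i, -, rfl⟩ ⟨j, -, h⟩
    exact hτσ (Prod.ext_iff.1 h).2.symm
  have hrestrict : ∀ t, Measurable fun (f : column t → α) (i : ι) =>
      f ⟨(i, t), Finset.mem_image_of_mem _ (mem_univ i)⟩ := fun t =>
    by fun_prop
  exact (hindep.indepFun_finset _ _ hdisj fun p => hX p.1 p.2).comp (hrestrict τ) (hrestrict σ)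

end Probability

section Model

variable {Ω : Type*} {m K : ℕ}

/-- The paper's `ℓ_i(t + 1, ω_{i,t+1})`, the signals being indexed from `0`. -/
noncomputable def certainLikelihood (πθ : Fin K → ℝ) (X : ℕ → Ω → Fin K) (t : ℕ) (x : Ω) : ℝ :=
  πθ (X t x) * (((t + 1 + K - 1 : ℕ)) : ℝ) / (((sigCount X (X t x) t x + 1 : ℕ)) : ℝ)

noncomputable def logAvgRatio (πstar πθ : Fin m → Fin K → ℝ) (κ : Fin m → Fin K) : ℝ :=
  Real.log ((1 / (m : ℝ)) * ∑ i, πθ i (κ i) / πstar i (κ i))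

lemma neg_DCA_eq_sum (πstar πθ : Fin m → Fin K → ℝ) :
    -DCA πstar πθ = ∑ κ : Fin m → Fin K, (∏ i, πstar i (κ i)) * logAvgRatio πstar πθ κ := by
  rw [DCA, neg_neg]
  rfl

variable {πstar πθ : Fin K → ℝ} {X : ℕ → Ω → Fin K}

lemma certainLikelihood_pos (hθ : ∀ k, 0 < πθ k) (t : ℕ) (x : Ω) :
    0 < certainLikelihood πθ X t x := by
  have hK : 0 < K := (X t x).pos
  unfold certainLikelihood
  exact div_pos (mul_pos (hθ _) (Nat.cast_pos.2 (by omega))) (Nat.cast_pos.2 (Nat.succ_pos _))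

lemma log_certainLikelihood_sub_log_ratio (hθ : ∀ k, 0 < πθ k) (hstar : ∀ k, 0 < πstar k)
    (t : ℕ) (x : Ω) :
    Real.log (certainLikelihood πθ X t x) - Real.log (πθ (X t x) / πstar (X t x)) =
      Real.log ((t + K) * πstar (X t x) / (sigCount X (X t x) t x + 1)) := by
  have hθ' := (hθ (X t x)).ne'
  have hstar' := (hstar (X t x)).ne'
  rw [← Real.log_div (certainLikelihood_pos hθ t x).ne' (div_ne_zero hθ' hstar'),
    certainLikelihood, show t + 1 + K - 1 = t + K by omega]
  push_cast
  field_simp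

lemma tendsto_log_certainLikelihood_sub_log_ratio (hθ : ∀ k, 0 < πθ k)
    (hstar : ∀ k, 0 < πstar k) {x : Ω}
    (hfreq : ∀ k, Tendsto (fun t => (sigCount X k t x : ℝ) / t) atTop (𝓝 (πstar k))) :
    Tendsto (fun t => Real.log (certainLikelihood πθ X t x) -
      Real.log (πθ (X t x) / πstar (X t x))) atTop (𝓝 0) := by
  simp_rw [log_certainLikelihood_sub_log_ratio hθ hstar]
  exact tendsto_apply_of_forall_tendsto_zero
    (fun k => tendsto_log_mul_div_of_tendsto_div (hstar k) K (hfreq k)) fun t => X t x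

variable [MeasurableSpace Ω]

lemma measurable_sigCount_apply (hX : ∀ t, Measurable (X t)) {κ : Ω → Fin K}
    (hκ : Measurable κ) (t : ℕ) : Measurable fun x => sigCount X (κ x) t x := by
  simp_rw [sigCount, Finset.card_filter]
  exact Finset.measurable_sum _ fun τ _ =>
    Measurable.ite (measurableSet_eq_fun (hX τ) hκ) measurable_const measurable_const

lemma measurable_certainLikelihood (hX : ∀ t, Measurable (X t)) (t : ℕ) :
    Measurable (certainLikelihood πθ X t) :=
  (((measurable_of_countable πθ).comp (hX t)).mul_const _).div
    ((measurable_of_countable fun n : ℕ => ((n + 1 : ℕ) : ℝ)).comp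
      (measurable_sigCount_apply hX (hX t) t))

end Model

section Beliefs

variable {Ω : Type*} {m K : ℕ} {πstar πθ : Fin m → Fin K → ℝ} {X : Fin m → ℕ → Ω → Fin K}

lemma measurable_belief [MeasurableSpace Ω] (hX : ∀ i t, Measurable (X i t))
    {μ : ℕ → Fin m → Ω → ℝ} (hμ0 : ∀ i x, μ 0 i x = 1)
    (hμ : ∀ t i x, μ (t + 1) i x =
      certainLikelihood (πθ i) (X i) t x * ∑ j, (1 / (m : ℝ)) * μ t j x) (t : ℕ) (i : Fin m) :
    Measurable (μ t i) := by
  induction t generalizing i with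
  | zero =>
    rw [show μ 0 i = fun _ => 1 from funext (hμ0 i)]
    exact measurable_const
  | succ t ih =>
    rw [show μ (t + 1) i = _ from funext (hμ t i)]
    exact (measurable_certainLikelihood (hX i) t).mul
      (Finset.measurable_sum _ fun j _ => (ih j).const_mul _)

lemma tendsto_log_belief_div (hstar : ∀ i k, 0 < πstar i k) (hθ : ∀ i k, 0 < πθ i k)
    {x : Ω} {μ : ℕ → Fin m → ℝ} (hμ0 : ∀ i, μ 0 i = 1)
    (hμ : ∀ t i, μ (t + 1) i = certainLikelihood (πθ i) (X i) t x * ∑ j, (1 / (m : ℝ)) * μ t j)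
    (hfreq : ∀ i k, Tendsto (fun t => (sigCount (X i) k t x : ℝ) / t) atTop (𝓝 (πstar i k)))
    {c : ℝ} (havg : Tendsto (fun t => (∑ τ ∈ range t, logAvgRatio πstar πθ fun i => X i τ x) / t)
      atTop (𝓝 c)) (i : Fin m) :
    Tendsto (fun t => Real.log (μ t i) / t) atTop (𝓝 c) := by
  have hm : 0 < m := i.pos
  have : Nonempty (Fin m) := ⟨i⟩
  set ℓ : Fin m → ℕ → ℝ := fun j τ => certainLikelihood (πθ j) (X j) τ x
  set r : Fin m → ℕ → ℝ := fun j τ => πθ j (X j τ x) / πstar j (X j τ x)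
  have hℓ : ∀ j τ, 0 < ℓ j τ := fun j τ => certainLikelihood_pos (hθ j) τ x
  have hr : ∀ j τ, 0 < r j τ := fun j τ => div_pos (hθ _ _) (hstar _ _)
  have hw : ∀ j : Fin m, 0 < 1 / (m : ℝ) := fun _ => by positivity
  have hw_sum : ∑ _j : Fin m, 1 / (m : ℝ) = 1 := by
    rw [Finset.sum_const, Finset.card_univ, Fintype.card_fin, nsmul_eq_mul]
    field_simp
  have hdev : ∀ j, Tendsto (fun τ => Real.log (ℓ j τ) - Real.log (r j τ)) atTop (𝓝 0) :=
    fun j => tendsto_log_certainLikelihood_sub_log_ratio (hθ j) (hstar j) (hfreq j)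
  have hlog : ∀ t, Real.log (μ (t + 1) i) =
      Real.log (ℓ i t) + ∑ τ ∈ range t, Real.log (∑ j, 1 / (m : ℝ) * ℓ j τ) := by
    have hL : ∀ τ, 0 < ∑ j, 1 / (m : ℝ) * ℓ j τ := fun τ =>
      Finset.sum_pos (fun j _ => mul_pos (hw j) (hℓ j τ)) univ_nonempty
    intro t
    rw [hμ, sum_mul_eq_prod_range_of_rankOne_update hw_sum hμ0 hμ,
      Real.log_mul (hℓ i t).ne' (Finset.prod_pos fun τ _ => hL τ).ne',
      Real.log_prod fun τ _ => (hL τ).ne']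
  refine tendsto_div_of_succ_eq_add_sum hlog ?_ (tendsto_sum_range_div_of_tendsto_sub ?_ havg)
  · -- `log ℓ i t` stays within `o(1)` of the finitely many values `log (πθ i k / πstar i k)`
    refine tendsto_div_natCast_of_tendsto_sub_of_abs_le (hdev i) fun t =>
      Finset.single_le_sum (f := fun k => |Real.log (πθ i k / πstar i k)|)
        (fun k _ => abs_nonneg _) (mem_univ (X i t x))
  · refine squeeze_zero_norm (fun τ => ?_)
      (by simpa using tendsto_finsetSum univ fun j _ => (hdev j).abs)
    rw [Real.norm_eq_abs, logAvgRatio, Finset.mul_sum]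
    exact abs_log_sum_mul_sub_log_sum_mul_le hw (hℓ · τ) (hr · τ) fun j =>
      Finset.single_le_sum (f := fun j => |Real.log (ℓ j τ) - Real.log (r j τ)|)
        (fun j _ => abs_nonneg _) (mem_univ j)

end Beliefs

section Signals

variable {Ω : Type*} [MeasurableSpace Ω] {P : Measure Ω} {m K : ℕ}
  {πstar : Fin m → Fin K → ℝ} {X : Fin m → ℕ → Ω → Fin K}

lemma identDistrib_signal (hX_meas : ∀ i t, Measurable (X i t))
    (hX_law : ∀ i t k, P {x | X i t x = k} = ENNReal.ofReal (πstar i k)) (i : Fin m) (t : ℕ) :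
    IdentDistrib (X i t) (X i 0) P P :=
  identDistrib_of_measure_preimage_singleton_eq (hX_meas i t) (hX_meas i 0) fun k =>
    (hX_law i t k).trans (hX_law i 0 k).symm

lemma ae_tendsto_sigCount_div_of_iid [IsFiniteMeasure P] (hstar : ∀ i k, 0 < πstar i k)
    (hX_meas : ∀ i t, Measurable (X i t)) (hX_indep : iIndepFun (fun p : Fin m × ℕ => X p.1 p.2) P)
    (hX_law : ∀ i t k, P {x | X i t x = k} = ENNReal.ofReal (πstar i k)) :
    ∀ᵐ x ∂P, ∀ i k, Tendsto (fun t => (sigCount (X i) k t x : ℝ) / t) atTop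
      (𝓝 (πstar i k)) := by
  simp only [ae_all_iff]
  intro i k
  have hindep : Pairwise ((IndepFun · · P) on X i) := fun τ σ hτσ =>
    hX_indep.indepFun (i := (i, τ)) (j := (i, σ)) (by simpa using hτσ)
  have hlaw : P.real (X i 0 ⁻¹' {k}) = πstar i k := by
    rw [measureReal_def, show X i 0 ⁻¹' {k} = {x | X i 0 x = k} from rfl, hX_law,
      ENNReal.toReal_ofReal (hstar i k).le]
  simpa [hlaw] using ae_tendsto_sigCount_div hindep (identDistrib_signal hX_meas hX_law i) k

lemma ae_tendsto_sum_logAvgRatio_div [IsFiniteMeasure P] (πθ : Fin m → Fin K → ℝ)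
    (hstar : ∀ i k, 0 < πstar i k)
    (hX_meas : ∀ i t, Measurable (X i t)) (hX_indep : iIndepFun (fun p : Fin m × ℕ => X p.1 p.2) P)
    (hX_law : ∀ i t k, P {x | X i t x = k} = ENNReal.ofReal (πstar i k)) :
    ∀ᵐ x ∂P, Tendsto (fun t => (∑ τ ∈ range t, logAvgRatio πstar πθ fun i => X i τ x) / t)
      atTop (𝓝 (-DCA πstar πθ)) := by
  have hcolumn : ∀ t κ, P ((fun x i => X i t x) ⁻¹' {κ}) = ∏ i, ENNReal.ofReal (πstar i (κ i)) :=
    fun t κ => by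
      rw [measure_preimage_pi_singleton_eq_prod (Y := fun i => X i t)
        (hX_indep.precomp (Prod.mk_left_injective t))]
      exact Finset.prod_congr rfl fun i _ => hX_law i t (κ i)
  have hident : ∀ t, IdentDistrib (fun x i => X i t x) (fun x i => X i 0 x) P P := fun t =>
    identDistrib_of_measure_preimage_singleton_eq (by fun_prop) (by fun_prop) fun κ => by
      rw [hcolumn, hcolumn]
  have hlaw : ∀ κ, P.real ((fun x i => X i 0 x) ⁻¹' {κ}) = ∏ i, πstar i (κ i) := fun κ => by
    rw [measureReal_def, hcolumn, ENNReal.toReal_prod]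
    exact Finset.prod_congr rfl fun i _ => ENNReal.toReal_ofReal (hstar i (κ i)).le
  simpa [hlaw, neg_DCA_eq_sum] using ae_tendsto_sum_range_div_of_fintype
    (pairwise_indepFun_columns hX_meas hX_indep) hident (logAvgRatio πstar πθ)

end Signals

theorem degroot_fully_connected_rate_general
    {Ω : Type*} [MeasurableSpace Ω] (P : Measure Ω) [IsProbabilityMeasure P]
    (m : ℕ) (K : ℕ)
    (πstar πθ : Fin m → Fin K → ℝ)
    (hstar_pos : ∀ i k, 0 < πstar i k)
    (hθ_pos : ∀ i k, 0 < πθ i k)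
    (X : Fin m → ℕ → Ω → Fin K) (hX_meas : ∀ i t, Measurable (X i t))
    (hX_indep : iIndepFun
      (fun p : Fin m × ℕ => X p.1 p.2) P)
    (hX_law : ∀ i t k, P {x | X i t x = k} = ENNReal.ofReal (πstar i k))
    (μ : ℕ → Fin m → Ω → ℝ)
    (hμ0 : ∀ i x, μ 0 i x = 1)
    (hμ : ∀ t i x, μ (t + 1) i x =
      πθ i (X i t x) * (((t + 1 + K - 1 : ℕ)) : ℝ) /
          (((sigCount (X i) (X i t x) t x + 1 : ℕ)) : ℝ) *
        ∑ j, (1 / (m : ℝ)) * μ t j x) :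
    ∀ i : Fin m, ∀ ε : ℝ, 0 < ε →
      Tendsto (fun t : ℕ =>
          P {x | ε < |(1 / (t : ℝ)) * Real.log (μ t i x) - (-(DCA πstar πθ))|})
        atTop (nhds 0) := by
  intro i ε hε
  refine tendsto_measure_lt_abs_sub_of_ae_tendsto (fun t =>
    ((Real.measurable_log.comp (measurable_belief hX_meas hμ0 hμ t i)).const_mul _)
      |>.aestronglyMeasurable) ?_ hε
  filter_upwards [ae_tendsto_sigCount_div_of_iid hstar_pos hX_meas hX_indep hX_law,
    ae_tendsto_sum_logAvgRatio_div πθ hstar_pos hX_meas hX_indep hX_law] with x hfreq havg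
  simpa only [one_div_mul_eq_div, Function.comp_apply] using
    tendsto_log_belief_div hstar_pos hθ_pos (μ := fun t j => μ t j x) (fun j => hμ0 j x)
      (fun t j => hμ t j x) hfreq havg i

/-- On the fully connected network, with certain models and a mismatched agent,
`(1/t) log μ_{it}` converges in probability to `−D_CA(Π*‖Π_θ)`. -/
theorem degroot_fully_connected_rate
    {Ω : Type*} [MeasurableSpace Ω] (P : Measure Ω) [IsProbabilityMeasure P]
    (m : ℕ) (hm : 1 ≤ m) (K : ℕ) (hK : 2 ≤ K)
    (πstar πθ : Fin m → Fin K → ℝ)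
    (hstar_pos : ∀ i k, 0 < πstar i k) (hstar_sum : ∀ i, ∑ k, πstar i k = 1)
    (hθ_pos : ∀ i k, 0 < πθ i k) (hθ_sum : ∀ i, ∑ k, πθ i k = 1)
    (X : Fin m → ℕ → Ω → Fin K) (hX_meas : ∀ i t, Measurable (X i t))
    (hX_indep : iIndepFun
      (fun p : Fin m × ℕ => X p.1 p.2) P)
    (hX_law : ∀ i t k, P {x | X i t x = k} = ENNReal.ofReal (πstar i k))
    (μ : ℕ → Fin m → Ω → ℝ)
    (hμ0 : ∀ i x, μ 0 i x = 1)
    (hμ : ∀ t i x, μ (t + 1) i x =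
      πθ i (X i t x) * (((t + 1 + K - 1 : ℕ)) : ℝ) /
          (((sigCount (X i) (X i t x) t x + 1 : ℕ)) : ℝ) *
        ∑ j, (1 / (m : ℝ)) * μ t j x)
    (hmismatch : ∃ i, πθ i ≠ πstar i) :
    ∀ i : Fin m, ∀ ε : ℝ, 0 < ε →
      Tendsto (fun t : ℕ =>
          P {x | ε < |(1 / (t : ℝ)) * Real.log (μ t i x) - (-(DCA πstar πθ))|})
        atTop (nhds 0) :=
  degroot_fully_connected_rate_general P m K πstar πθ hstar_pos hθ_pos X hX_meas hX_indep hX_law μ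
    hμ0 hμ
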